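/- Let G = (V, E) be a graph with nonnegative, pairwise-distinct edge weights, let p ∈ [0,1], and let E' ⊆ E contain each edge independently with probability p. Consider the greedy-based edge-arrival algorithm: an edge e ∈ E \ E' is a candidate if e ∈ Greedy(G[E' ∪ {e}]); the edges of E \ E' are processed in some order and a candidate edge is added to the output matching M if both its endpoints are currently unmatched in M. Then for every rule assigning an arrival order to E \ E' (possibly depending on E'), E[w(M)] ≥ (p(1−p)/2) · E[w(Greedy(G[E']))]. -/

import Mathlib

open Finset

open scoped Classical

/-- Greedy matching with fuel: repeatedly pick the maximum-weight remaining edge and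
discard all edges conflicting with it. -/
noncomputable def greedyAux {α : Type*} [DecidableEq α] (w : α → ℝ)
    (conflict : α → α → Prop) : ℕ → Finset α → Finset α
  | 0, _ => ∅
  | n + 1, F =>
    if h : F.Nonempty then
      let e := (F.exists_max_image w h).choose
      insert e (greedyAux w conflict n (F.filter fun f => ¬ conflict e f))
    else ∅

/-- The greedy matching of an edge set `F`: process edges in decreasing order of weight,
adding an edge whenever it conflicts with no previously added edge. -/
noncomputable def greedy {α : Type*} [DecidableEq α] (w : α → ℝ)
    (conflict : α → α → Prop) (F : Finset α) : Finset α :=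
  greedyAux w conflict F.card F

/-- Two edges of a general graph (given as ordered pairs of endpoints) conflict iff
they share an endpoint. -/
def gconf {V : Type*} (e f : V × V) : Prop :=
  e.1 = f.1 ∨ e.1 = f.2 ∨ e.2 = f.1 ∨ e.2 = f.2

/-- Expectation of `f` over a random subset of `s` containing each element
independently with probability `p`. -/
noncomputable def expSubsets {ι : Type*} (p : ℝ) (s : Finset ι) (f : Finset ι → ℝ) : ℝ :=
  ∑ A ∈ s.powerset, p ^ A.card * (1 - p) ^ (s.card - A.card) * f A

/-- A set of edges is a matching if no two distinct edges conflict. -/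
def isMatching {α : Type*} (conflict : α → α → Prop) (M : Finset α) : Prop :=
  ∀ e ∈ M, ∀ f ∈ M, e ≠ f → ¬ conflict e f

/-- `OPT`: the maximum total weight of a matching contained in the edge set `E`. -/
noncomputable def optWeight {α : Type*} (w : α → ℝ) (conflict : α → α → Prop)
    (E : Finset α) : ℝ :=
  (E.powerset.filter fun M => isMatching conflict M).sup'
    ⟨∅, Finset.mem_filter.mpr ⟨Finset.empty_mem_powerset _,
        fun e he => absurd he (Finset.notMem_empty e)⟩⟩
    (fun M => ∑ e ∈ M, w e)

/-- One step of the greedy-based edge-arrival algorithm with sample `E'`: the arriving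
edge `e` is a candidate if `e ∈ Greedy(G[E' ∪ {e}])`, and a candidate is added if both
of its endpoints are currently unmatched. -/
noncomputable def stepE {V : Type*} [DecidableEq V] (w : V × V → ℝ)
    (E' : Finset (V × V)) (M : Finset (V × V)) (e : V × V) : Finset (V × V) :=
  M ∪ (greedy w gconf (insert e E')).filter
      (fun f => f = e ∧ ∀ g ∈ M, ¬ gconf g f)

/-- The output matching of the greedy-based edge-arrival algorithm with sample `E'`,
when the online edges arrive in the order given by `order`. -/
noncomputable def runE {V : Type*} [DecidableEq V] (w : V × V → ℝ)
    (E' : Finset (V × V)) (order : List (V × V)) : Finset (V × V) :=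
  order.foldl (stepE w E') ∅

/-!
Call an edge `e ∉ A` a candidate for the sample `A` if `e ∈ Greedy(A ∪ {e})`, and protected if
moreover every other candidate sharing an endpoint with `e` is heavier. Flipping the coin of `e`
gives `(1 - p) · P[e ∈ Greedy(A)] = p · P[e is a candidate]`. Once the sampled edges heavier than
`e` are fixed, candidacy of `e` is decided, and a candidate stays protected with probability at
least `p²`: scanning the lighter edges in decreasing weight, the first one that would become a
candidate at an endpoint of `e` is sampled with probability `p`, and then it enters the greedy
matching of every lighter edge's sample and blocks all lighter edges at that endpoint. The output
`M` blocks every candidate, and protected candidates form a matching each of whose edges is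
blocked by an edge of `M` at least as heavy, so `w(protected) ≤ 2 w(M)`. Hence
`E[w(M)] ≥ ½ ∑ₑ wₑ P[e protected] ≥ ½ p (1 - p) ∑ₑ wₑ P[e ∈ Greedy]`.
-/

lemma filter_not_ssubset {α : Type*} {c : α → α → Prop} (hrefl : ∀ a, c a a) {F : Finset α}
    {m : α} (hm : m ∈ F) : F.filter (fun f => ¬ c m f) ⊂ F :=
  filter_ssubset.mpr ⟨m, hm, not_not.mpr (hrefl m)⟩

section Greedy

variable {α : Type*} [DecidableEq α] {w : α → ℝ} {c : α → α → Prop}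

lemma greedyAux_succ (n : ℕ) {F : Finset α} (hF : F.Nonempty) :
    greedyAux w c (n + 1) F = insert (F.exists_max_image w hF).choose
      (greedyAux w c n (F.filter fun f => ¬ c (F.exists_max_image w hF).choose f)) := by
  rw [greedyAux, dif_pos hF]

lemma greedy_empty : greedy w c (∅ : Finset α) = ∅ := rfl

lemma greedyAux_subset : ∀ (n : ℕ) (F : Finset α), greedyAux w c n F ⊆ F
  | 0, _ => empty_subset _
  | n + 1, F => by
    rcases F.eq_empty_or_nonempty with rfl | hF
    · simp [greedyAux]
    · rw [greedyAux_succ n hF]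
      exact insert_subset (F.exists_max_image w hF).choose_spec.1
        ((greedyAux_subset n _).trans (filter_subset _ _))

lemma greedy_subset (F : Finset α) : greedy w c F ⊆ F := greedyAux_subset _ F

lemma greedyAux_eq_greedy (hrefl : ∀ a, c a a) (n : ℕ) (F : Finset α) (hF : F.card ≤ n) :
    greedyAux w c n F = greedy w c F := by
  induction n using Nat.strong_induction_on generalizing F with
  | _ n ih =>
  rcases F.eq_empty_or_nonempty with rfl | hne
  · cases n <;> simp [greedy, greedyAux]
  · obtain ⟨k, hk⟩ : ∃ k, F.card = k + 1 := ⟨F.card - 1, by have := hne.card_pos; omega⟩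
    obtain ⟨n, rfl⟩ : ∃ n', n = n' + 1 := ⟨n - 1, by omega⟩
    have hcard := card_lt_card
      (filter_not_ssubset hrefl (F.exists_max_image w hne).choose_spec.1)
    rw [greedy, hk, greedyAux_succ n hne, greedyAux_succ k hne,
      ih n (by omega) _ (by omega), ih k (by omega) _ (by omega)]

lemma exists_greedy_eq_insert (hrefl : ∀ a, c a a) {F : Finset α} (hF : F.Nonempty) :
    ∃ m ∈ F, (∀ f ∈ F, w f ≤ w m) ∧
      greedy w c F = insert m (greedy w c (F.filter fun f => ¬ c m f)) := by
  obtain ⟨hm, hmax⟩ := (F.exists_max_image w hF).choose_spec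
  refine ⟨_, hm, hmax, ?_⟩
  obtain ⟨k, hk⟩ : ∃ k, F.card = k + 1 := ⟨F.card - 1, by have := hF.card_pos; omega⟩
  have hcard := card_lt_card (filter_not_ssubset hrefl hm)
  rw [greedy, hk, greedyAux_succ k hF, greedyAux_eq_greedy hrefl _ _ (by omega)]

lemma greedy_isMatching (hrefl : ∀ a, c a a) (hsymm : ∀ a b, c a b → c b a) (F : Finset α) :
    isMatching c (greedy w c F) := by
  induction F using Finset.strongInduction with
  | H F ih =>
  rcases F.eq_empty_or_nonempty with rfl | hF
  · simp [greedy_empty, isMatching]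
  obtain ⟨m, hm, -, heq⟩ := exists_greedy_eq_insert (w := w) hrefl hF
  have hfree : ∀ f ∈ greedy w c (F.filter fun f => ¬ c m f), ¬ c m f := fun f hf =>
    (mem_filter.mp (greedy_subset _ hf)).2
  rw [heq]
  intro e he f hf hne
  rcases mem_insert.mp he with rfl | he <;> rcases mem_insert.mp hf with rfl | hf
  · exact absurd rfl hne
  · exact hfree f hf
  · exact fun h => hfree e he (hsymm _ _ h)
  · exact ih _ (filter_not_ssubset hrefl hm) e he f hf hne

lemma greedy_filter_le (hrefl : ∀ a, c a a) {F : Finset α} (hinj : Set.InjOn w F) (t : ℝ) :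
    greedy w c (F.filter fun f => t ≤ w f) = (greedy w c F).filter fun f => t ≤ w f := by
  induction F using Finset.strongInduction with
  | H F ih =>
  rcases F.eq_empty_or_nonempty with rfl | hF
  · simp [greedy_empty]
  obtain ⟨m, hm, hmax, heq⟩ := exists_greedy_eq_insert (w := w) hrefl hF
  by_cases ht : t ≤ w m
  · have hmt : m ∈ F.filter fun f => t ≤ w f := mem_filter.mpr ⟨hm, ht⟩
    obtain ⟨m', hm', hmax', heq'⟩ := exists_greedy_eq_insert (w := w) hrefl ⟨m, hmt⟩
    obtain rfl : m' = m := hinj (mem_filter.mp hm').1 hm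
      (le_antisymm (hmax _ (mem_filter.mp hm').1) (hmax' m hmt))
    have hsub := filter_not_ssubset hrefl hm
    rw [heq', heq, filter_insert, if_pos ht, filter_comm,
      ih _ hsub (hinj.mono (coe_subset.mpr hsub.subset))]
  · have hlight : ∀ f ∈ F, ¬ t ≤ w f := fun f hf h => ht (h.trans (hmax f hf))
    rw [filter_false_of_mem hlight,
      filter_false_of_mem fun f hf => hlight f (greedy_subset F hf), greedy_empty]

lemma mem_greedy_insert_of_lt (hrefl : ∀ a, c a a) {B : Finset α} (hinj : Set.InjOn w B)
    {a : α} (hlt : ∀ b ∈ B, w a < w b) :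
    a ∈ greedy w c (insert a B) ↔ ∀ m ∈ greedy w c B, ¬ c m a := by
  induction B using Finset.strongInduction with
  | H B ih =>
  rcases B.eq_empty_or_nonempty with rfl | hB
  · obtain ⟨m, hm, -, heq⟩ := exists_greedy_eq_insert (w := w) hrefl (singleton_nonempty a)
    obtain rfl := mem_singleton.mp hm
    simp [heq, greedy_empty]
  obtain ⟨m, hm, hmax, heq⟩ := exists_greedy_eq_insert (w := w) hrefl hB
  obtain ⟨m', hm', hmax', heq'⟩ :=
    exists_greedy_eq_insert (w := w) hrefl (insert_nonempty a B)
  have haB : a ∉ B := fun h => (hlt a h).false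
  obtain rfl : m' = m := by
    rcases mem_insert.mp hm' with rfl | hm'B
    · exact absurd (hmax' m (mem_insert_of_mem hm)) (hlt m hm).not_ge
    · exact hinj hm'B hm (le_antisymm (hmax _ hm'B) (hmax' m (mem_insert_of_mem hm)))
  have ham : a ≠ m' := fun h => (hlt m' hm).ne (congrArg w h)
  have hsub := filter_not_ssubset hrefl hm
  rw [heq', heq, filter_insert, forall_mem_insert, mem_insert]
  split_ifs with hc
  · have := greedy_subset (w := w) (c := c) (B.filter fun f => ¬ c m' f)
    simp only [ham, false_or, hc, not_true, false_and, iff_false]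
    exact fun h => haB (filter_subset _ _ (this h))
  · rw [ih _ hsub (hinj.mono (coe_subset.mpr hsub.subset))
      fun b hb => hlt b (hsub.subset hb)]
    tauto

lemma greedy_subset_greedy_union (hrefl : ∀ a, c a a) {B S : Finset α}
    (hinj : Set.InjOn w ↑(B ∪ S)) {t : ℝ} (hB : ∀ b ∈ B, t ≤ w b) (hS : ∀ s ∈ S, w s < t) :
    greedy w c B ⊆ greedy w c (B ∪ S) := by
  have hfilter : (B ∪ S).filter (fun f => t ≤ w f) = B := by
    ext x
    simp only [mem_filter, mem_union]
    constructor
    · rintro ⟨hx | hx, hxt⟩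
      exacts [hx, absurd hxt (hS x hx).not_ge]
    · exact fun hx => ⟨Or.inl hx, hB x hx⟩
  calc greedy w c B = (greedy w c (B ∪ S)).filter fun f => t ≤ w f := by
        rw [← greedy_filter_le hrefl hinj t, hfilter]
    _ ⊆ greedy w c (B ∪ S) := filter_subset _ _

lemma mem_greedy_insert_iff (hrefl : ∀ a, c a a) {A : Finset α} {x : α}
    (hinj : Set.InjOn w ↑(insert x A)) :
    x ∈ greedy w c (insert x A) ↔ ∀ m ∈ greedy w c (A.filter fun f => w x < w f), ¬ c m x := by
  have hfilter : (insert x A).filter (fun f => w x ≤ w f) =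
      insert x (A.filter fun f => w x < w f) := by
    ext f
    simp only [mem_filter, mem_insert]
    constructor
    · rintro ⟨rfl | hf, hle⟩
      · exact Or.inl rfl
      · refine or_iff_not_imp_left.mpr fun hfx => ⟨hf, hle.lt_of_ne fun h => hfx ?_⟩
        exact hinj (mem_insert_of_mem hf) (mem_insert_self x A) h.symm
    · rintro (rfl | ⟨hf, hlt⟩)
      exacts [⟨Or.inl rfl, le_rfl⟩, ⟨Or.inr hf, hlt.le⟩]
  have hmem : x ∈ greedy w c (insert x A) ↔
      x ∈ (greedy w c (insert x A)).filter fun f => w x ≤ w f := by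
    simp
  rw [hmem, ← greedy_filter_le hrefl hinj, hfilter, mem_greedy_insert_of_lt hrefl
    (hinj.mono (coe_subset.mpr ((filter_subset _ _).trans (subset_insert x A))))
    fun f hf => (mem_filter.mp hf).2]

lemma mem_greedy_insert_union_iff (hrefl : ∀ a, c a a) {A S : Finset α} {x : α}
    (hinj : Set.InjOn w ↑(insert x (A ∪ S))) (hS : ∀ s ∈ S, w s < w x) :
    x ∈ greedy w c (insert x (A ∪ S)) ↔ x ∈ greedy w c (insert x A) := by
  have hfilter : (A ∪ S).filter (fun f => w x < w f) = A.filter fun f => w x < w f := by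
    rw [filter_union, filter_false_of_mem fun s hs => (hS s hs).not_gt, union_empty]
  rw [mem_greedy_insert_iff hrefl hinj, mem_greedy_insert_iff hrefl
    (hinj.mono (coe_subset.mpr (insert_subset_insert x subset_union_left))), hfilter]

end Greedy

section Expectation

variable {ι : Type*} {p : ℝ}

lemma expSubsets_congr {s : Finset ι} {f g : Finset ι → ℝ} (h : ∀ A ∈ s.powerset, f A = g A) :
    expSubsets p s f = expSubsets p s g :=
  sum_congr rfl fun A hA => by rw [h A hA]

lemma expSubsets_mono (hp : p ∈ Set.Icc (0 : ℝ) 1) {s : Finset ι} {f g : Finset ι → ℝ}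
    (h : ∀ A ∈ s.powerset, f A ≤ g A) : expSubsets p s f ≤ expSubsets p s g := by
  have := hp.1
  have : 0 ≤ 1 - p := sub_nonneg.mpr hp.2
  exact sum_le_sum fun A hA => by gcongr; exact h A hA

lemma expSubsets_nonneg (hp : p ∈ Set.Icc (0 : ℝ) 1) {s : Finset ι} {f : Finset ι → ℝ}
    (h : ∀ A ∈ s.powerset, 0 ≤ f A) : 0 ≤ expSubsets p s f := by
  have := hp.1
  have : 0 ≤ 1 - p := sub_nonneg.mpr hp.2
  exact sum_nonneg fun A hA => by have := h A hA; positivity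

lemma expSubsets_mul_left (s : Finset ι) (a : ℝ) (f : Finset ι → ℝ) :
    expSubsets p s (fun A => a * f A) = a * expSubsets p s f := by
  simp only [expSubsets, mul_sum]
  exact sum_congr rfl fun A _ => by ring

lemma expSubsets_insert [DecidableEq ι] {a : ι} {s : Finset ι} (ha : a ∉ s) (f : Finset ι → ℝ) :
    expSubsets p (insert a s) f =
      p * expSubsets p s (fun A => f (insert a A)) + (1 - p) * expSubsets p s f := by
  simp only [expSubsets, sum_powerset_insert ha, mul_sum, card_insert_of_notMem ha]
  rw [add_comm]
  congr 1 <;> refine sum_congr rfl fun A hA => ?_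
  · have haA : a ∉ A := fun h => ha (mem_powerset.mp hA h)
    rw [card_insert_of_notMem haA, Nat.add_sub_add_right, pow_succ]
    ring
  · rw [Nat.sub_add_comm (card_le_card (mem_powerset.mp hA)), pow_succ]
    ring

lemma expSubsets_const [DecidableEq ι] (s : Finset ι) (a : ℝ) :
    expSubsets p s (fun _ => a) = a := by
  induction s using Finset.induction_on with
  | empty => simp [expSubsets]
  | insert b s hb ih => rw [expSubsets_insert hb, ih]; ring

lemma expSubsets_union [DecidableEq ι] {s t : Finset ι} (hst : Disjoint s t) (f : Finset ι → ℝ) :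
    expSubsets p (s ∪ t) f = expSubsets p s (fun A => expSubsets p t (fun B => f (A ∪ B))) := by
  induction s using Finset.induction_on generalizing f with
  | empty => simp [expSubsets]
  | insert a s ha ih =>
    have hds : Disjoint s t := disjoint_of_subset_left (subset_insert a s) hst
    have hat : a ∉ s ∪ t := by
      simp only [mem_union, not_or]
      exact ⟨ha, disjoint_left.mp hst (mem_insert_self a s)⟩
    simp only [insert_union, expSubsets_insert hat, expSubsets_insert ha, ih hds]

noncomputable def probSubsets (p : ℝ) (s : Finset ι) (P : Finset ι → Prop) : ℝ :=
  expSubsets p s fun A => if P A then 1 else 0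

lemma expSubsets_sum_filter {β : Type*} (s : Finset ι) (E : Finset β) (P : Finset ι → β → Prop)
    [∀ A, DecidablePred (P A)] (g : β → ℝ) :
    expSubsets p s (fun A => ∑ e ∈ E with P A e, g e) =
      ∑ e ∈ E, g e * probSubsets p s (fun A => P A e) := by
  simp only [probSubsets, expSubsets, sum_filter, mul_sum]
  rw [sum_comm]
  exact sum_congr rfl fun A _ => sum_congr rfl fun e _ => by split_ifs <;> ring

lemma probSubsets_mono (hp : p ∈ Set.Icc (0 : ℝ) 1) {s : Finset ι} {P Q : Finset ι → Prop}
    (h : ∀ A ∈ s.powerset, P A → Q A) : probSubsets p s P ≤ probSubsets p s Q :=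
  expSubsets_mono hp fun A hA => by
    by_cases hP : P A
    · rw [if_pos hP, if_pos (h A hA hP)]
    · rw [if_neg hP]
      split_ifs <;> norm_num

lemma probSubsets_eq_zero [DecidableEq ι] {s : Finset ι} {P : Finset ι → Prop}
    (h : ∀ A ∈ s.powerset, ¬ P A) : probSubsets p s P = 0 := by
  rw [probSubsets, expSubsets_congr fun A hA => if_neg (h A hA), expSubsets_const]

lemma probSubsets_nonneg (hp : p ∈ Set.Icc (0 : ℝ) 1) (s : Finset ι) (P : Finset ι → Prop) :
    0 ≤ probSubsets p s P :=
  expSubsets_nonneg hp fun A _ => by split_ifs <;> norm_num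

lemma probSubsets_congr {s : Finset ι} {P Q : Finset ι → Prop}
    (h : ∀ A ∈ s.powerset, P A ↔ Q A) : probSubsets p s P = probSubsets p s Q :=
  expSubsets_congr fun A hA => by simp only [h A hA]

lemma probSubsets_eq_one [DecidableEq ι] {s : Finset ι} {P : Finset ι → Prop}
    (h : ∀ A ∈ s.powerset, P A) : probSubsets p s P = 1 := by
  rw [probSubsets, expSubsets_congr fun A hA => if_pos (h A hA), expSubsets_const]

lemma probSubsets_le_one [DecidableEq ι] (hp : p ∈ Set.Icc (0 : ℝ) 1) (s : Finset ι)
    (P : Finset ι → Prop) : probSubsets p s P ≤ 1 :=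
  (probSubsets_mono hp (Q := fun _ => True) fun _ _ _ => trivial).trans_eq
    (probSubsets_eq_one fun _ _ => trivial)

lemma probSubsets_insert [DecidableEq ι] {a : ι} {s : Finset ι} (ha : a ∉ s) (P : Finset ι → Prop) :
    probSubsets p (insert a s) P =
      p * probSubsets p s (fun A => P (insert a A)) + (1 - p) * probSubsets p s P :=
  expSubsets_insert ha _

lemma probSubsets_union [DecidableEq ι] {s t : Finset ι} (hst : Disjoint s t)
    (P : Finset ι → Prop) :
    probSubsets p (s ∪ t) P = expSubsets p s (fun A => probSubsets p t (fun B => P (A ∪ B))) :=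
  expSubsets_union hst _

end Expectation

section Candidates

variable {α : Type*} [DecidableEq α] {w : α → ℝ} {c : α → α → Prop}

def IsCandidate (w : α → ℝ) (c : α → α → Prop) (A : Finset α) (e : α) : Prop :=
  e ∉ A ∧ e ∈ greedy w c (insert e A)

def IsProtected (w : α → ℝ) (c : α → α → Prop) (E A : Finset α) (e : α) : Prop :=
  IsCandidate w c A e ∧ ∀ f ∈ E, IsCandidate w c A f → f ≠ e → c f e → w e < w f

lemma isCandidate_union_iff (hrefl : ∀ a, c a a) {B S : Finset α} {x : α}
    (hinj : Set.InjOn w ↑(insert x (B ∪ S))) (hB : ∀ b ∈ B, w x < w b)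
    (hS : ∀ s ∈ S, w s < w x) :
    IsCandidate w c (B ∪ S) x ↔ x ∈ greedy w c (insert x B) := by
  have hx : x ∉ B ∪ S := by
    rw [mem_union, not_or]
    exact ⟨fun h => (hB x h).false, fun h => (hS x h).false⟩
  rw [IsCandidate, and_iff_right hx, mem_greedy_insert_union_iff hrefl hinj hS]

lemma one_sub_mul_probSubsets_mem_greedy {p : ℝ} {E : Finset α} {e : α}
    (he : e ∈ E) :
    (1 - p) * probSubsets p E (fun A => e ∈ greedy w c A) =
      p * probSubsets p E (fun A => IsCandidate w c A e) := by
  have hne : e ∉ E.erase e := notMem_erase e E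
  have hnotin : ∀ A ∈ (E.erase e).powerset, e ∉ A := fun A hA h => hne (mem_powerset.mp hA h)
  rw [← insert_erase he, probSubsets_insert hne, probSubsets_insert hne,
    probSubsets_eq_zero (P := fun A => e ∈ greedy w c A)
      fun A hA h => hnotin A hA (greedy_subset A h),
    probSubsets_eq_zero (P := fun A => IsCandidate w c (insert e A) e)
      fun A _ h => h.1 (mem_insert_self e A),
    probSubsets_congr (P := fun A => IsCandidate w c A e)
      fun A hA => and_iff_right (hnotin A hA)]
  ring

lemma IsCandidate.not_conflict_of_mem_greedy (hrefl : ∀ a, c a a)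
    (hsymm : ∀ a b, c a b → c b a) {B S : Finset α} {f₀ f : α}
    (hinj : Set.InjOn w ↑(insert f (insert f₀ B ∪ S))) (hf₀ : f₀ ∈ greedy w c (insert f₀ B))
    (hB : ∀ b ∈ B, w f₀ < w b) (hS : ∀ s ∈ insert f S, w s < w f₀)
    (hf : IsCandidate w c (insert f₀ B ∪ S) f) : ¬ c f₀ f := by
  have hunion : insert f (insert f₀ B ∪ S) = insert f₀ B ∪ insert f S :=
    (union_insert _ _ _).symm
  have hf' := hf.2
  rw [hunion] at hinj hf'
  have hf₀' := greedy_subset_greedy_union hrefl hinj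
    (forall_mem_insert _ _ _ |>.mpr ⟨le_rfl, fun b hb => (hB b hb).le⟩) hS hf₀
  refine greedy_isMatching hrefl hsymm _ f₀ hf₀' f hf' ?_
  exact fun h => (hS f (mem_insert_self f S)).ne (congrArg w h.symm)

end Candidates

lemma gconf_refl {V : Type*} (e : V × V) : gconf e e := Or.inl rfl

lemma gconf_symm {V : Type*} {e f : V × V} (h : gconf e f) : gconf f e := by
  unfold gconf at *
  tauto

lemma gconf_of_mem {V : Type*} {e f : V × V} {v : V} (he : e.1 = v ∨ e.2 = v)
    (hf : f.1 = v ∨ f.2 = v) : gconf e f := by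
  unfold gconf
  rcases he with rfl | rfl <;> rcases hf with hf | hf <;> simp [hf]

section Protection

variable {V : Type*} [DecidableEq V] {w : V × V → ℝ} {p : ℝ}

def Touches (f : V × V) (T : Finset V) : Prop := f.1 ∈ T ∨ f.2 ∈ T

lemma touches_pair_iff {e f : V × V} : Touches f {e.1, e.2} ↔ gconf f e := by
  simp only [Touches, gconf, mem_insert, mem_singleton, or_assoc]

def NoCandidateTouches (w : V × V → ℝ) (L B S : Finset (V × V)) (T : Finset V) : Prop :=
  ∀ f ∈ L, IsCandidate w gconf (B ∪ S) f → ¬ Touches f T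

lemma noCandidateTouches_insert_sample {L B S : Finset (V × V)} {T : Finset V} (f₀ : V × V) :
    NoCandidateTouches w (insert f₀ L) B (insert f₀ S) T ↔
      NoCandidateTouches w L (insert f₀ B) S T := by
  have hunion : B ∪ insert f₀ S = insert f₀ B ∪ S := by rw [union_insert, insert_union]
  have hf₀ : ¬ IsCandidate w gconf (insert f₀ B ∪ S) f₀ := fun h =>
    h.1 (mem_union_left _ (mem_insert_self f₀ B))
  simp only [NoCandidateTouches, forall_mem_insert, hunion]
  exact ⟨fun h => h.2, fun h => ⟨fun h' => absurd h' hf₀, h⟩⟩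

lemma noCandidateTouches_insert_unsampled {L B S : Finset (V × V)} {T : Finset V} {f₀ : V × V}
    (hinj : Set.InjOn w ↑(insert f₀ L ∪ B)) (hB : ∀ b ∈ B, w f₀ < w b)
    (hL : ∀ f ∈ L, w f < w f₀) (hS : S ⊆ L) :
    NoCandidateTouches w (insert f₀ L) B S T ↔
      (f₀ ∈ greedy w gconf (insert f₀ B) → ¬ Touches f₀ T) ∧ NoCandidateTouches w L B S T := by
  have hcand := isCandidate_union_iff gconf_refl
    (hinj.mono (coe_subset.mpr (insert_subset (mem_union_left _ (mem_insert_self _ _))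
      (union_subset subset_union_right ((hS.trans (subset_insert _ _)).trans
        subset_union_left)))))
    hB fun s hs => hL s (hS hs)
  simp only [NoCandidateTouches, forall_mem_insert, hcand]

lemma NoCandidateTouches.of_mem_greedy {L B S : Finset (V × V)} {T : Finset V} {f₀ : V × V}
    (hinj : Set.InjOn w ↑(L ∪ insert f₀ B)) (hf₀ : f₀ ∈ greedy w gconf (insert f₀ B))
    (hB : ∀ b ∈ B, w f₀ < w b) (hL : ∀ f ∈ L, w f < w f₀) (hS : S ⊆ L)
    (h : NoCandidateTouches w L (insert f₀ B) S (T.filter fun v => ¬ (f₀.1 = v ∨ f₀.2 = v))) :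
    NoCandidateTouches w L (insert f₀ B) S T := by
  intro f hf hcand htouch
  have hfree : ¬ gconf f₀ f := hcand.not_conflict_of_mem_greedy gconf_refl
    (fun _ _ => gconf_symm)
    (hinj.mono (coe_subset.mpr (insert_subset (mem_union_left _ hf)
      (union_subset subset_union_right (hS.trans subset_union_left)))))
    hf₀ hB (forall_mem_insert _ _ _ |>.mpr ⟨hL f hf, fun s hs => hL s (hS hs)⟩)
  refine h f hf hcand ?_
  rcases htouch with hv | hv
  · by_cases h₀ : f₀.1 = f.1 ∨ f₀.2 = f.1
    · exact absurd (gconf_of_mem h₀ (Or.inl rfl)) hfree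
    · exact Or.inl (mem_filter.mpr ⟨hv, h₀⟩)
  · by_cases h₀ : f₀.1 = f.2 ∨ f₀.2 = f.2
    · exact absurd (gconf_of_mem h₀ (Or.inr rfl)) hfree
    · exact Or.inr (mem_filter.mpr ⟨hv, h₀⟩)

lemma pow_card_le_probSubsets_noCandidateTouches (hp : p ∈ Set.Icc (0 : ℝ) 1)
    (L : Finset (V × V)) : ∀ (B : Finset (V × V)) (T : Finset V), Set.InjOn w ↑(L ∪ B) →
      (∀ f ∈ L, ∀ b ∈ B, w f < w b) →
      p ^ T.card ≤ probSubsets p L (fun S => NoCandidateTouches w L B S T) := by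
  induction L using Finset.induction_on_max_value w with
  | empty =>
    intro B T _ _
    rw [probSubsets_eq_one fun A _ f hf => absurd hf (notMem_empty f)]
    exact pow_le_one₀ hp.1 hp.2
  | insert f₀ L hf₀L hmax ih =>
    intro B T hinj hlt
    have hunion : L ∪ insert f₀ B = insert f₀ L ∪ B := by rw [union_insert, insert_union]
    have hlt₀ : ∀ f ∈ L, w f < w f₀ := fun f hf => (hmax f hf).lt_of_ne fun h =>
      hf₀L (hinj (mem_union_left _ (mem_insert_of_mem hf))
        (mem_union_left _ (mem_insert_self f₀ L)) h ▸ hf)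
    have hlt₀B : ∀ b ∈ B, w f₀ < w b := hlt f₀ (mem_insert_self f₀ L)
    have hltL : ∀ f ∈ L, ∀ b ∈ B, w f < w b := fun f hf => hlt f (mem_insert_of_mem hf)
    have hinj' : Set.InjOn w ↑(L ∪ insert f₀ B) := hunion ▸ hinj
    have hlt' : ∀ f ∈ L, ∀ b ∈ insert f₀ B, w f < w b := fun f hf =>
      (forall_mem_insert _ _ _).mpr ⟨hlt₀ f hf, hltL f hf⟩
    rw [probSubsets_insert hf₀L,
      probSubsets_congr fun S _ => noCandidateTouches_insert_sample f₀]
    have hsample := ih (insert f₀ B) T hinj' hlt'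
    have hq : 0 ≤ 1 - p := sub_nonneg.mpr hp.2
    by_cases hbad : f₀ ∈ greedy w gconf (insert f₀ B) ∧ Touches f₀ T
    · set T' := T.filter fun v => ¬ (f₀.1 = v ∨ f₀.2 = v)
      have hT' : T'.card < T.card := by
        refine card_lt_card (filter_ssubset.mpr ?_)
        rcases hbad.2 with hv | hv
        exacts [⟨_, hv, not_not.mpr (Or.inl rfl)⟩, ⟨_, hv, not_not.mpr (Or.inr rfl)⟩]
      calc p ^ T.card ≤ p * p ^ T'.card := by
            rw [← pow_succ']; exact pow_le_pow_of_le_one hp.1 hp.2 hT'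
        _ ≤ p * probSubsets p L (fun S => NoCandidateTouches w L (insert f₀ B) S T') :=
            mul_le_mul_of_nonneg_left (ih _ T' hinj' hlt') hp.1
        _ ≤ p * probSubsets p L (fun S => NoCandidateTouches w L (insert f₀ B) S T) :=
            mul_le_mul_of_nonneg_left (probSubsets_mono hp fun S hS =>
              NoCandidateTouches.of_mem_greedy hinj' hbad.1 hlt₀B hlt₀ (mem_powerset.mp hS)) hp.1
        _ ≤ _ := le_add_of_nonneg_right (mul_nonneg hq (probSubsets_nonneg hp _ _))
    · rw [probSubsets_congr fun S hS => (noCandidateTouches_insert_unsampled hinj hlt₀B hlt₀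
        (mem_powerset.mp hS)).trans (and_iff_right fun h => (hbad ⟨h, ·⟩))]
      have hskipped := ih B T
        (hinj.mono (coe_subset.mpr (union_subset_union_left (subset_insert f₀ L)))) hltL
      nlinarith [mul_le_mul_of_nonneg_left hsample hp.1, mul_le_mul_of_nonneg_left hskipped hq]

lemma sq_mul_probSubsets_isCandidate_union_le (hp : p ∈ Set.Icc (0 : ℝ) 1)
    {E B : Finset (V × V)} {e : V × V} (hinj : Set.InjOn w ↑E) (he : e ∈ E) (hBE : B ⊆ E)
    (hB : ∀ b ∈ B, w e < w b) :
    p ^ 2 * probSubsets p (E.filter fun f => w f < w e) (fun S => IsCandidate w gconf (B ∪ S) e)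
      ≤ probSubsets p (E.filter fun f => w f < w e) (fun S => IsProtected w gconf E (B ∪ S) e) := by
  set L := E.filter fun f => w f < w e
  have hLE : L ⊆ E := filter_subset _ _
  have hcand : ∀ S ∈ L.powerset,
      IsCandidate w gconf (B ∪ S) e ↔ e ∈ greedy w gconf (insert e B) := by
    intro S hS
    have hS : S ⊆ L := mem_powerset.mp hS
    exact isCandidate_union_iff gconf_refl
      (hinj.mono (coe_subset.mpr (insert_subset he (union_subset hBE (hS.trans hLE)))))
      hB fun s hs => (mem_filter.mp (hS hs)).2
  by_cases helig : e ∈ greedy w gconf (insert e B)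
  · have hprot : ∀ S ∈ L.powerset, NoCandidateTouches w L B S {e.1, e.2} →
        IsProtected w gconf E (B ∪ S) e := by
      refine fun S hS hno => ⟨(hcand S hS).mpr helig, fun f hf hfc hfe hconf => ?_⟩
      by_contra hle
      have hfe' : w f < w e := (not_lt.mp hle).lt_of_ne fun h => hfe (hinj hf he h)
      exact hno f (mem_filter.mpr ⟨hf, hfe'⟩) hfc (touches_pair_iff.mpr hconf)
    calc p ^ 2 * probSubsets p L (fun S => IsCandidate w gconf (B ∪ S) e)
        ≤ p ^ 2 := mul_le_of_le_one_right (sq_nonneg p) (probSubsets_le_one hp _ _)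
      _ ≤ p ^ ({e.1, e.2} : Finset V).card := pow_le_pow_of_le_one hp.1 hp.2 card_le_two
      _ ≤ probSubsets p L (fun S => NoCandidateTouches w L B S {e.1, e.2}) :=
          pow_card_le_probSubsets_noCandidateTouches hp L B _
            (hinj.mono (coe_subset.mpr (union_subset hLE hBE)))
            fun f hf b hb => (mem_filter.mp hf).2.trans (hB b hb)
      _ ≤ _ := probSubsets_mono hp hprot
  · rw [probSubsets_eq_zero fun S hS h => helig ((hcand S hS).mp h), mul_zero]
    exact probSubsets_nonneg hp _ _

lemma sq_mul_probSubsets_isCandidate_le (hp : p ∈ Set.Icc (0 : ℝ) 1) {E : Finset (V × V)}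
    {e : V × V} (hinj : Set.InjOn w ↑E) (he : e ∈ E) :
    p ^ 2 * probSubsets p E (fun A => IsCandidate w gconf A e) ≤
      probSubsets p E (fun A => IsProtected w gconf E A e) := by
  set H := E.filter fun f => w e < w f
  set L := E.filter fun f => w f < w e
  have hE : E = insert e (H ∪ L) := by
    ext f
    simp only [H, L, mem_insert, mem_union, mem_filter]
    constructor
    · intro hf
      rcases lt_trichotomy (w e) (w f) with h | h | h
      exacts [Or.inr (Or.inl ⟨hf, h⟩), Or.inl (hinj hf he h.symm), Or.inr (Or.inr ⟨hf, h⟩)]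
    · rintro (rfl | ⟨hf, -⟩ | ⟨hf, -⟩) <;> assumption
  have heHL : e ∉ H ∪ L := by simp [H, L]
  have hdisj : Disjoint H L := disjoint_filter.mpr fun f _ h h' => (h.trans h').false
  have hsplit (P : Finset (V × V) → Prop) : probSubsets p E P =
      p * expSubsets p H (fun A => probSubsets p L fun S => P (insert e (A ∪ S))) +
        (1 - p) * expSubsets p H (fun A => probSubsets p L fun S => P (A ∪ S)) := by
    rw [hE, probSubsets_insert heHL, probSubsets_union hdisj, probSubsets_union hdisj]
  have hsampled : expSubsets p H (fun A => probSubsets p L fun S =>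
      IsCandidate w gconf (insert e (A ∪ S)) e) = 0 := by
    rw [expSubsets_congr fun A _ => probSubsets_eq_zero fun S _ h => h.1 (mem_insert_self _ _),
      expSubsets_const]
  have hunsampled : p ^ 2 * expSubsets p H (fun A => probSubsets p L fun S =>
      IsCandidate w gconf (A ∪ S) e) ≤
      expSubsets p H (fun A => probSubsets p L fun S => IsProtected w gconf E (A ∪ S) e) := by
    rw [← expSubsets_mul_left]
    refine expSubsets_mono hp fun A hA => ?_
    have hAH : A ⊆ H := mem_powerset.mp hA
    exact sq_mul_probSubsets_isCandidate_union_le hp hinj he (hAH.trans (filter_subset _ _))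
      fun b hb => (mem_filter.mp (hAH hb)).2
  rw [hsplit, hsplit, hsampled]
  have hq : 0 ≤ 1 - p := sub_nonneg.mpr hp.2
  have hsampled_nonneg : 0 ≤ expSubsets p H (fun A => probSubsets p L fun S =>
      IsProtected w gconf E (insert e (A ∪ S)) e) :=
    expSubsets_nonneg hp fun A _ => probSubsets_nonneg hp _ _
  nlinarith [mul_le_mul_of_nonneg_left hunsampled hq, mul_nonneg hp.1 hsampled_nonneg]

lemma mul_probSubsets_mem_greedy_le (hp : p ∈ Set.Icc (0 : ℝ) 1) {E : Finset (V × V)}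
    {e : V × V} (hinj : Set.InjOn w ↑E) (he : e ∈ E) :
    p * (1 - p) * probSubsets p E (fun A => e ∈ greedy w gconf A) ≤
      probSubsets p E (fun A => IsProtected w gconf E A e) :=
  calc p * (1 - p) * probSubsets p E (fun A => e ∈ greedy w gconf A)
      = p * (p * probSubsets p E (fun A => IsCandidate w gconf A e)) := by
        rw [mul_assoc, one_sub_mul_probSubsets_mem_greedy he]
    _ ≤ _ := by rw [← mul_assoc, ← sq]; exact sq_mul_probSubsets_isCandidate_le hp hinj he

lemma card_le_two_of_isMatching {P : Finset (V × V)} (hP : isMatching gconf P) {m : V × V}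
    (hm : ∀ e ∈ P, gconf m e) : P.card ≤ 2 := by
  let shared : V × V → V := fun e => if e.1 = m.1 ∨ e.2 = m.1 then m.1 else m.2
  have hshared : ∀ e ∈ P, e.1 = shared e ∨ e.2 = shared e := by
    intro e he
    simp only [shared]
    split_ifs with h
    · exact h
    · have := hm e he
      unfold gconf at this
      tauto
  refine (card_le_card_of_injOn (t := {m.1, m.2}) shared (fun e _ => ?_)
    fun e he f hf hef => ?_).trans card_le_two
  · simp only [coe_insert, coe_singleton, Set.mem_insert_iff, Set.mem_singleton_iff, shared]
    split_ifs <;> simp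
  · by_contra hne
    exact hP e he f hf hne (gconf_of_mem (hshared e he) (hef ▸ hshared f hf))

/-- Each edge of `M` dominates at most two edges of the matching `P`, one at each endpoint. -/
lemma sum_le_two_mul_sum_of_dominated {P M : Finset (V × V)} (hP : isMatching gconf P)
    (hM : ∀ m ∈ M, 0 ≤ w m) (hdom : ∀ e ∈ P, ∃ m ∈ M, gconf m e ∧ w e ≤ w m) :
    ∑ e ∈ P, w e ≤ 2 * ∑ m ∈ M, w m := by
  choose! b hbM hbconf hbw using hdom
  calc ∑ e ∈ P, w e ≤ ∑ e ∈ P, w (b e) := sum_le_sum hbw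
    _ = ∑ m ∈ M, ∑ e ∈ P with b e = m, w (b e) := (sum_fiberwise_of_maps_to hbM _).symm
    _ = ∑ m ∈ M, (P.filter fun e => b e = m).card * w m := by
        refine sum_congr rfl fun m _ => ?_
        rw [sum_congr rfl fun e he => congrArg w (mem_filter.mp he).2, sum_const, nsmul_eq_mul]
    _ ≤ ∑ m ∈ M, 2 * w m := by
        refine sum_le_sum fun m hm => mul_le_mul_of_nonneg_right ?_ (hM m hm)
        have hfibre : (P.filter fun e => b e = m).card ≤ 2 := card_le_two_of_isMatching
          (fun e he f hf => hP e (mem_filter.mp he).1 f (mem_filter.mp hf).1)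
          fun e he => (mem_filter.mp he).2 ▸ hbconf e (mem_filter.mp he).1
        exact_mod_cast hfibre
    _ = 2 * ∑ m ∈ M, w m := (mul_sum _ _ _).symm

lemma sum_isProtected_le_two_mul_sum {E A M : Finset (V × V)} (hw : ∀ m ∈ M, 0 ≤ w m)
    (hM : ∀ m ∈ M, m ∈ E ∧ IsCandidate w gconf A m)
    (hblock : ∀ f ∈ E, IsCandidate w gconf A f → ∃ m ∈ M, gconf m f) :
    ∑ e ∈ E with IsProtected w gconf E A e, w e ≤ 2 * ∑ m ∈ M, w m := by
  refine sum_le_two_mul_sum_of_dominated ?_ hw fun e he => ?_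
  · intro e he f hf hne hconf
    obtain ⟨heE, he⟩ := mem_filter.mp he
    obtain ⟨hfE, hf⟩ := mem_filter.mp hf
    exact (he.2 f hfE hf.1 hne.symm (gconf_symm hconf)).asymm
      (hf.2 e heE he.1 hne hconf)
  · obtain ⟨heE, he⟩ := mem_filter.mp he
    obtain ⟨m, hm, hconf⟩ := hblock e heE he.1
    refine ⟨m, hm, hconf, ?_⟩
    rcases eq_or_ne m e with rfl | hne
    · exact le_rfl
    · exact (he.2 m (hM m hm).1 (hM m hm).2 hne hconf).le

end Protection

section Run

variable {V : Type*} [DecidableEq V] {w : V × V → ℝ} {A : Finset (V × V)}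

lemma subset_foldl_stepE (l : List (V × V)) (M : Finset (V × V)) :
    M ⊆ l.foldl (stepE w A) M := by
  induction l generalizing M with
  | nil => exact Subset.rfl
  | cons e l ih => exact subset_union_left.trans (ih _)

lemma mem_foldl_stepE {l : List (V × V)} {M : Finset (V × V)} {x : V × V}
    (hx : x ∈ l.foldl (stepE w A) M) : x ∈ M ∨ x ∈ l ∧ x ∈ greedy w gconf (insert x A) := by
  induction l generalizing M with
  | nil => exact Or.inl hx
  | cons e l ih =>
    rcases ih hx with hx | ⟨hxl, hxg⟩
    · rcases mem_union.mp hx with hx | hx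
      · exact Or.inl hx
      · obtain ⟨hxg, rfl, -⟩ := mem_filter.mp hx
        exact Or.inr ⟨List.mem_cons_self, hxg⟩
    · exact Or.inr ⟨List.mem_cons_of_mem _ hxl, hxg⟩

lemma exists_gconf_mem_foldl_stepE {l : List (V × V)} (M : Finset (V × V)) {x : V × V}
    (hxl : x ∈ l) (hx : x ∈ greedy w gconf (insert x A)) :
    ∃ m ∈ l.foldl (stepE w A) M, gconf m x := by
  induction l generalizing M with
  | nil => exact absurd hxl List.not_mem_nil
  | cons e l ih =>
    rcases List.mem_cons.mp hxl with rfl | hxl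
    · by_cases hfree : ∀ g ∈ M, ¬ gconf g x
      · exact ⟨x, subset_foldl_stepE l _ (mem_union_right _ (mem_filter.mpr ⟨hx, rfl, hfree⟩)),
          gconf_refl x⟩
      · obtain ⟨g, hg, hconf⟩ := not_forall₂.mp hfree
        exact ⟨g, subset_foldl_stepE l _ (subset_union_left hg), not_not.mp hconf⟩
    · exact ih _ hxl

variable {E : Finset (V × V)} {l : List (V × V)}

lemma mem_runE (hl : l.Perm (E \ A).toList) {x : V × V} (hx : x ∈ runE w A l) :
    x ∈ E ∧ IsCandidate w gconf A x := by
  rcases mem_foldl_stepE hx with hx | ⟨hxl, hxg⟩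
  · exact absurd hx (notMem_empty x)
  · obtain ⟨hxE, hxA⟩ := mem_sdiff.mp (mem_toList.mp (hl.mem_iff.mp hxl))
    exact ⟨hxE, hxA, hxg⟩

lemma exists_gconf_mem_runE (hl : l.Perm (E \ A).toList) {x : V × V} (hxE : x ∈ E)
    (hx : IsCandidate w gconf A x) : ∃ m ∈ runE w A l, gconf m x :=
  exists_gconf_mem_foldl_stepE ∅ (hl.mem_iff.mpr (mem_toList.mpr (mem_sdiff.mpr ⟨hxE, hx.1⟩)))
    hx.2

end Run

theorem stmt15_general {V : Type*} [DecidableEq V]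
    (E : Finset (V × V)) (w : V × V → ℝ)
    (hw0 : ∀ e ∈ E, 0 ≤ w e) (hwinj : Set.InjOn w ↑E)
    (p : ℝ) (hp : p ∈ Set.Icc (0 : ℝ) 1)
    (σ : Finset (V × V) → List (V × V))
    (hσ : ∀ A : Finset (V × V), (σ A).Perm (E \ A).toList) :
    expSubsets p E (fun E' => ∑ e ∈ runE w E' (σ E'), w e)
      ≥ (p * (1 - p) / 2) * expSubsets p E (fun E' => ∑ e ∈ greedy w gconf E', w e) := by
  have hgreedy : ∀ A ∈ E.powerset,
      ∑ e ∈ greedy w gconf A, w e = ∑ e ∈ E with e ∈ greedy w gconf A, w e := fun A hA => by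
    rw [filter_mem_eq_inter, inter_eq_right.mpr ((greedy_subset A).trans (mem_powerset.mp hA))]
  have hrun : ∀ A ∈ E.powerset,
      1 / 2 * ∑ e ∈ E with IsProtected w gconf E A e, w e ≤ ∑ e ∈ runE w A (σ A), w e := by
    intro A _
    have := sum_isProtected_le_two_mul_sum (fun m hm => hw0 m (mem_runE (hσ A) hm).1)
      (fun m hm => mem_runE (hσ A) hm) fun f hf hc => exists_gconf_mem_runE (hσ A) hf hc
    linarith
  calc (p * (1 - p) / 2) * expSubsets p E (fun A => ∑ e ∈ greedy w gconf A, w e)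
      = 1 / 2 * ∑ e ∈ E, w e * (p * (1 - p) * probSubsets p E (fun A => e ∈ greedy w gconf A)) := by
        rw [expSubsets_congr hgreedy, expSubsets_sum_filter, mul_sum, mul_sum]
        exact sum_congr rfl fun e _ => by ring
    _ ≤ 1 / 2 * ∑ e ∈ E, w e * probSubsets p E (fun A => IsProtected w gconf E A e) := by
        gcongr with e he
        · exact hw0 e he
        · exact mul_probSubsets_mem_greedy_le hp hwinj he
    _ = expSubsets p E (fun A => 1 / 2 * ∑ e ∈ E with IsProtected w gconf E A e, w e) := by
        rw [expSubsets_mul_left, expSubsets_sum_filter]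
    _ ≤ _ := expSubsets_mono hp hrun

/-- Direct edge reimbursement: for the greedy-based edge-arrival algorithm with edge-sampling probability `p`, and every arrival-order rule of `E \ E'`, `E[w(M)] ≥ (p(1-p)/2) · E[w(Greedy(G[E']))]`. -/
theorem stmt15 {V : Type*} [DecidableEq V]
    (E : Finset (V × V)) (w : V × V → ℝ)
    (hprop : ∀ e ∈ E, e.1 ≠ e.2) (hw0 : ∀ e ∈ E, 0 ≤ w e) (hwinj : Set.InjOn w ↑E)
    (p : ℝ) (hp : p ∈ Set.Icc (0 : ℝ) 1)
    (σ : Finset (V × V) → List (V × V))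
    (hσ : ∀ A : Finset (V × V), (σ A).Perm (E \ A).toList) :
    expSubsets p E (fun E' => ∑ e ∈ runE w E' (σ E'), w e)
      ≥ (p * (1 - p) / 2) * expSubsets p E (fun E' => ∑ e ∈ greedy w gconf E', w e) :=
  stmt15_general E w hw0 hwinj p hp σ hσ
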